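/- arXiv:1504.02632 — 2 statements merged into one kernel-verified Lean document; each statement's English description precedes it below -/
import Mathlib

section
/- In the twisted group algebra A(S_n), for any g ∈ S_n and 1 ≤ a < b ≤ n: g* · t_{b,a}* = (∏_{a < j ≤ b, g(a) > g(j)} X_{g(a)g(j)}·X_{g(j)g(a)}) · (g·t_{b,a})*, where t_{b,a} is the cycle m↦m+1 (a ≤ m ≤ b-1), b↦a. -/
open MvPolynomial

/-- The polynomial ring `R_n = ℂ[X_{ab} : 1 ≤ a,b ≤ n]` in `n²` commuting variables. -/
abbrev R (n : ℕ) : Type := MvPolynomial (Fin n × Fin n) ℂ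

/-- The action of `S_n` on `R_n`: `g.X_{ab} = X_{g(a) g(b)}`. -/
noncomputable def permAct {n : ℕ} (g : Equiv.Perm (Fin n)) (p : R n) : R n :=
  MvPolynomial.rename (fun ab => (g ab.1, g ab.2)) p

/-- The twisted group algebra `A(S_n) = R_n ⋊ ℂ[S_n]`, as formal `R_n`-linear
combinations of permutations. -/
abbrev A (n : ℕ) : Type := Equiv.Perm (Fin n) →₀ R n

/-- The identity element `id = 1·id` of `A(S_n)`. -/
noncomputable instance {n : ℕ} : One (A n) := ⟨Finsupp.single 1 1⟩

/-- The twisted multiplication `(p₁ g₁)·(p₂ g₂) = (p₁ · (g₁.p₂)) g₁g₂` on `A(S_n)`. -/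
noncomputable instance {n : ℕ} : Mul (A n) :=
  ⟨fun x y => x.sum fun g₁ p₁ => y.sum fun g₂ p₂ =>
    Finsupp.single (g₁ * g₂) (p₁ * permAct g₁ p₂)⟩

/-- The set of inversions `I(g) = {(a,b) : a < b, g(a) > g(b)}`. -/
def inversions {n : ℕ} (g : Equiv.Perm (Fin n)) : Finset (Fin n × Fin n) :=
  Finset.univ.filter fun ab => ab.1 < ab.2 ∧ g ab.2 < g ab.1

/-- The monomial `X_g = ∏_{(a,b) ∈ I(g⁻¹)} X_{ab}`. -/
noncomputable def Xg {n : ℕ} (g : Equiv.Perm (Fin n)) : R n :=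
  ∏ ab ∈ inversions g⁻¹, MvPolynomial.X ab

/-- The element `g* = X_g · g ∈ A(S_n)`. -/
noncomputable def gstar {n : ℕ} (g : Equiv.Perm (Fin n)) : A n :=
  Finsupp.single g (Xg g)

/-- The cycle `t_{k,j}` sending `m ↦ m+1` for `j ≤ m ≤ k-1` and `k ↦ j`,
fixing all points outside `[j,k]` (meaningful for `j ≤ k`). -/
def cyc {n : ℕ} [NeZero n] (k j : Fin n) : Equiv.Perm (Fin n) :=
  Equiv.permCongr (Equiv.addLeft j) (Fin.cycleRange (k - j))

/-!
Write `X_g = ∏ X_{uv}` over the pairs `u < v` whose order `g⁻¹` reverses. Then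
`g*·h* = (X_g · g.X_h) gh`, and the exponent of each `X_{uv}` in `X_g · g.X_h` and in `X_{gh}` is
decided by whether `u < v`, `g⁻¹ u < g⁻¹ v` and `(gh)⁻¹ u < (gh)⁻¹ v`. Comparing the eight cases,
the only surplus comes from a pair `x < y` reversed by `h⁻¹` that `g` puts back in order, and it is
`X_{g x, g y} X_{g y, g x}`. For `h = t_{b,a}`, which is Mathlib's `Fin.cycleIcc a b`, the pairs
reversed by `h⁻¹` are the `(a, j)` with `a < j ≤ b`.
-/

-- The exponent count of `X_{uv}`, with `p, q, r` standing for `u < v`, `g⁻¹ u < g⁻¹ v`,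
-- `(gh)⁻¹ u < (gh)⁻¹ v`.
lemma ite_and_not_mul_ite_and_not {M : Type*} [MulOneClass M] (x : M) (p q r : Prop)
    [Decidable p] [Decidable q] [Decidable r] :
    (if p ∧ ¬q then x else 1) * (if q ∧ ¬r then x else 1) =
      (if (q ∧ ¬r) ∧ ¬p then x else 1) * (if (¬q ∧ r) ∧ p then x else 1) *
        (if p ∧ ¬r then x else 1) := by
  by_cases p <;> by_cases q <;> by_cases r <;> simp [*]

lemma lt_iff_not_lt_of_ne {α : Type*} [LinearOrder α] {x y : α} (h : x ≠ y) : y < x ↔ ¬x < y :=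
  (not_lt.trans h.symm.le_iff_lt).symm

section TwistedGroupAlgebra

variable {n : ℕ}

lemma single_mul_single (g h : Equiv.Perm (Fin n)) (p q : R n) :
    (Finsupp.single g p * Finsupp.single h q : A n) = Finsupp.single (g * h) (p * permAct g q) := by
  change Finsupp.sum _ _ = _
  simp [permAct]

lemma Xg_eq_prod_ite (g : Equiv.Perm (Fin n)) :
    Xg g = ∏ uv : Fin n × Fin n, if uv.1 < uv.2 ∧ g⁻¹ uv.2 < g⁻¹ uv.1 then X uv else 1 := by
  rw [Xg, inversions, Finset.prod_filter]

lemma permAct_Xg (g h : Equiv.Perm (Fin n)) :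
    permAct g (Xg h) = ∏ uv : Fin n × Fin n,
      if g⁻¹ uv.1 < g⁻¹ uv.2 ∧ (g * h)⁻¹ uv.2 < (g * h)⁻¹ uv.1 then X uv else 1 := by
  rw [Xg_eq_prod_ite, permAct, map_prod]
  refine Fintype.prod_equiv (g.prodCongr g) _ _ fun xy => ?_
  simp only [Equiv.prodCongr_apply, Prod.map_fst, Prod.map_snd, mul_inv_rev, Equiv.Perm.mul_apply,
    Equiv.Perm.coe_inv, Equiv.symm_apply_apply, apply_ite (rename _), rename_X, map_one]
  rfl

noncomputable def gstarCocycle (g h : Equiv.Perm (Fin n)) : R n :=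
  ∏ xy ∈ (inversions h⁻¹).filter (fun xy => g xy.2 < g xy.1),
    X (g xy.1, g xy.2) * X (g xy.2, g xy.1)

lemma gstarCocycle_eq_prod_ite (g h : Equiv.Perm (Fin n)) :
    gstarCocycle g h =
      (∏ uv : Fin n × Fin n, if (g⁻¹ uv.1 < g⁻¹ uv.2 ∧ (g * h)⁻¹ uv.2 < (g * h)⁻¹ uv.1) ∧
        uv.2 < uv.1 then X uv else 1) *
      ∏ uv : Fin n × Fin n, if (g⁻¹ uv.2 < g⁻¹ uv.1 ∧ (g * h)⁻¹ uv.1 < (g * h)⁻¹ uv.2) ∧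
        uv.1 < uv.2 then X uv else 1 := by
  rw [gstarCocycle, Finset.prod_mul_distrib, inversions, Finset.filter_filter, Finset.prod_filter,
    Finset.prod_filter]
  congr 1
  · refine Fintype.prod_equiv (g.prodCongr g) _ _ fun xy => ?_
    simp only [Equiv.prodCongr_apply, Prod.map_fst, Prod.map_snd, mul_inv_rev, Equiv.Perm.mul_apply,
      Equiv.Perm.coe_inv, Equiv.symm_apply_apply]
    rfl
  · refine Fintype.prod_equiv ((g.prodCongr g).trans (Equiv.prodComm _ _)) _ _ fun xy => ?_
    simp only [Equiv.trans_apply, Equiv.prodComm_apply, Equiv.prodCongr_apply, Prod.map_fst,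
      Prod.map_snd, Prod.fst_swap, Prod.snd_swap, mul_inv_rev, Equiv.Perm.mul_apply,
      Equiv.Perm.coe_inv, Equiv.symm_apply_apply]
    rfl

lemma Xg_mul_permAct_Xg (g h : Equiv.Perm (Fin n)) :
    Xg g * permAct g (Xg h) = gstarCocycle g h * Xg (g * h) := by
  rw [gstarCocycle_eq_prod_ite, Xg_eq_prod_ite, permAct_Xg, Xg_eq_prod_ite,
    ← Finset.prod_mul_distrib, ← Finset.prod_mul_distrib, ← Finset.prod_mul_distrib]
  refine Finset.prod_congr rfl fun ⟨u, v⟩ _ => ?_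
  rcases eq_or_ne u v with rfl | huv
  · simp
  simp only [lt_iff_not_lt_of_ne huv, lt_iff_not_lt_of_ne ((g⁻¹).injective.ne huv),
    lt_iff_not_lt_of_ne (((g * h)⁻¹).injective.ne huv)]
  exact ite_and_not_mul_ite_and_not _ _ _ _

lemma gstar_mul_gstar (g h : Equiv.Perm (Fin n)) :
    gstar g * gstar h = gstarCocycle g h • gstar (g * h) := by
  rw [gstar, gstar, gstar, single_mul_single, Xg_mul_permAct_Xg, Finsupp.smul_single, smul_eq_mul]

end TwistedGroupAlgebra

section Cycle

variable {n : ℕ} [NeZero n] {i j : Fin n}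

lemma cyc_eq_cycleIcc (hij : i ≤ j) : cyc j i = Fin.cycleIcc i j := by
  ext k : 1
  have hcyc : cyc j i k = i + Fin.cycleRange (j - i) (k - i) := by
    simp [cyc, sub_eq_neg_add]
  have hji : ((j - i : Fin n) : ℕ) = j - i := Fin.coe_sub_iff_le.mpr hij
  rw [hcyc]
  rcases lt_or_ge k i with hki | hik
  · have hlt : j - i < k - i := by rw [Fin.lt_def, hji, Fin.coe_sub_iff_lt.mpr hki]; omega
    rw [Fin.cycleIcc_of_lt hki, Fin.cycleRange_of_gt hlt, add_sub_cancel]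
  have hki : ((k - i : Fin n) : ℕ) = k - i := Fin.coe_sub_iff_le.mpr hik
  rcases lt_trichotomy k j with hkj | rfl | hjk
  · have hlt : k - i < j - i := by rw [Fin.lt_def, hji, hki]; omega
    rw [Fin.cycleIcc_of_ge_of_lt hik hkj, Fin.cycleRange_of_lt hlt, ← add_assoc, add_sub_cancel]
  · rw [Fin.cycleIcc_of_last hij, Fin.cycleRange_self, add_zero]
  · have hlt : j - i < k - i := by rw [Fin.lt_def, hji, hki]; omega
    rw [Fin.cycleIcc_of_gt hjk, Fin.cycleRange_of_gt hlt, add_sub_cancel]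

lemma val_cycleIcc (hij : i ≤ j) (k : Fin n) :
    (Fin.cycleIcc i j k : ℕ) =
      if (k : ℕ) < i then (k : ℕ) else if (k : ℕ) < j then (k : ℕ) + 1
      else if (k : ℕ) = j then (i : ℕ) else (k : ℕ) := by
  have := j.isLt
  split_ifs with hki hkj hk
  · rw [Fin.cycleIcc_of_lt (Fin.lt_def.mpr hki)]
  · rw [Fin.cycleIcc_of_ge_of_lt (Fin.le_def.mpr (by omega)) (Fin.lt_def.mpr hkj),
      Fin.val_add_one_of_lt' (by omega)]
  · rw [Fin.ext hk, Fin.cycleIcc_of_last hij]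
  · rw [Fin.cycleIcc_of_gt (Fin.lt_def.mpr (by omega))]

lemma inversions_inv_cycleIcc (hij : i ≤ j) :
    inversions (Fin.cycleIcc i j)⁻¹ =
      (Finset.Ioc i j).map (Function.Embedding.sectR i (Fin n)) := by
  ext ⟨x, y⟩
  obtain ⟨p, rfl⟩ := (Fin.cycleIcc i j).surjective x
  obtain ⟨q, rfl⟩ := (Fin.cycleIcc i j).surjective y
  simp only [inversions, Finset.mem_filter, Finset.mem_univ, true_and, Finset.mem_map,
    Finset.mem_Ioc, Function.Embedding.sectR_apply, Prod.mk.injEq, Equiv.Perm.coe_inv,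
    Equiv.symm_apply_apply, exists_eq_right_right]
  simp only [Fin.lt_def, Fin.le_def, Fin.ext_iff, val_cycleIcc hij]
  split_ifs <;> omega

end Cycle

/-- for any `g ∈ S_n` and `a < b`,
`g*·t_{b,a}* = (∏_{a<j≤b, g(a)>g(j)} X_{g(a)g(j)}X_{g(j)g(a)}) · (g·t_{b,a})*`. -/
theorem gstar_mul_cycle_general {n : ℕ} [NeZero n] (a b : Fin n) (hab : a < b)
    (g : Equiv.Perm (Fin n)) :
    gstar g * gstar (cyc b a) =
      (∏ j ∈ Finset.univ.filter (fun j : Fin n => a < j ∧ j ≤ b ∧ g j < g a),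
          (MvPolynomial.X (g a, g j) * MvPolynomial.X (g j, g a) : R n)) •
        gstar (g * cyc b a) := by
  rw [gstar_mul_gstar, gstarCocycle, cyc_eq_cycleIcc hab.le, inversions_inv_cycleIcc hab.le,
    Finset.filter_map, Finset.prod_map]
  congr 1
  refine Finset.prod_congr ?_ fun j _ => rfl
  ext j
  simp [and_assoc]
end

section
/- In the twisted group algebra A(S_n), the element α_n* = Σ_{g∈S_n} g* factorizes as α_n* = β₁*·β₂*⋯β_n*, where β_{n-k+1}* = Σ_{k ≤ m ≤ n} t_{m,k}* for 1 ≤ k ≤ n (the factors taken in order β₁* on the left corresponding to k = n, down to β_n* on the right corresponding to k = 1). -/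
open MvPolynomial

/-!
Write `F ℓ` for the permutations fixing `0, …, ℓ - 1`, so `F 0 = S_n` and `F n = {1}`.
Every `h ∈ F k` factors uniquely as `h = g * t_{m,k}` with `g ∈ F (k + 1)` and `m = h⁻¹ k ≥ k`.
All inversions of `t_{m,k}⁻¹` start at `k`, which `g` fixes while preserving the order of the
points above `k`; hence the inversion sets of `g` and `t_{m,k}⁻¹` are disjoint, lengths add, and
`g* t_{m,k}* = h*`. So `(∑_{g ∈ F (k+1)} g*) (∑_{m ≥ k} t_{m,k}*) = ∑_{h ∈ F k} h*`, and
descending induction on `k` from `F n = {1}` yields the factorization.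
-/

namespace A

variable {n : ℕ}

lemma mul_def (x y : A n) : x * y =
    x.sum fun g₁ p₁ => y.sum fun g₂ p₂ => Finsupp.single (g₁ * g₂) (p₁ * permAct g₁ p₂) := rfl

lemma one_def : (1 : A n) = Finsupp.single 1 1 := rfl

lemma single_mul_single (g h : Equiv.Perm (Fin n)) (p q : R n) :
    (Finsupp.single g p : A n) * Finsupp.single h q = Finsupp.single (g * h) (p * permAct g q) := by
  simp [mul_def, permAct]

protected lemma zero_mul (x : A n) : 0 * x = 0 := by
  simp [mul_def]

protected lemma mul_zero (x : A n) : x * 0 = 0 := by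
  simp [mul_def]

protected lemma add_mul (x y z : A n) : (x + y) * z = x * z + y * z := by
  simp [mul_def, Finsupp.sum_add_index', add_mul]

protected lemma mul_add (x y z : A n) : x * (y + z) = x * y + x * z := by
  simp [mul_def, permAct, Finsupp.sum_add_index', mul_add]

protected lemma sum_mul {ι : Type*} (s : Finset ι) (f : ι → A n) (y : A n) :
    (∑ i ∈ s, f i) * y = ∑ i ∈ s, f i * y :=
  map_sum (AddMonoidHom.mk' (· * y) fun a b => A.add_mul a b y) f s

protected lemma mul_sum {ι : Type*} (x : A n) (s : Finset ι) (f : ι → A n) :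
    x * ∑ i ∈ s, f i = ∑ i ∈ s, x * f i :=
  map_sum (AddMonoidHom.mk' (x * ·) (A.mul_add x)) f s

protected lemma mul_assoc (x y z : A n) : x * y * z = x * (y * z) := by
  induction x using Finsupp.induction_linear with
  | zero => simp only [A.zero_mul]
  | add x x' hx hx' => simp only [A.add_mul, hx, hx']
  | single g p =>
    induction y using Finsupp.induction_linear with
    | zero => simp only [A.zero_mul, A.mul_zero]
    | add y y' hy hy' => simp only [A.add_mul, A.mul_add, hy, hy']
    | single h q =>
      induction z using Finsupp.induction_linear with
      | zero => simp only [A.mul_zero]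
      | add z z' hz hz' => simp only [A.mul_add, hz, hz']
      | single k r =>
        simp only [single_mul_single, mul_assoc, permAct, map_mul, rename_rename]
        rfl

protected lemma one_mul (x : A n) : 1 * x = x := by
  induction x using Finsupp.induction_linear with
  | zero => simp only [A.mul_zero]
  | add x x' hx hx' => simp only [A.mul_add, hx, hx']
  | single g p =>
    rw [one_def, single_mul_single, one_mul, one_mul]
    exact congrArg (Finsupp.single g) (rename_id_apply p)

protected lemma mul_one (x : A n) : x * 1 = x := by
  induction x using Finsupp.induction_linear with
  | zero => simp only [A.zero_mul]
  | add x x' hx hx' => simp only [A.add_mul, hx, hx']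
  | single g p => simp [one_def, single_mul_single, permAct]

lemma prod_append_singleton (l : List (A n)) (x : A n) : (l ++ [x]).prod = l.prod * x := by
  induction l with
  | nil => simp only [List.nil_append, List.prod_cons, List.prod_nil, A.mul_one, A.one_mul]
  | cons a l ih => simp only [List.cons_append, List.prod_cons, ih, A.mul_assoc]

end A

section Inversions

variable {n : ℕ}

@[simp] lemma mem_inversions {g : Equiv.Perm (Fin n)} {ab : Fin n × Fin n} :
    ab ∈ inversions g ↔ ab.1 < ab.2 ∧ g ab.2 < g ab.1 := by
  simp [inversions]

lemma disjoint_inversions_inv_image_inversions_inv (g h : Equiv.Perm (Fin n)) :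
    Disjoint (inversions g⁻¹) ((inversions h⁻¹).image (Prod.map g g)) := by
  simp only [Finset.disjoint_right, Finset.mem_image, Prod.exists, Prod.map, mem_inversions]
  rintro _ ⟨a, b, ⟨hab, -⟩, rfl⟩ ⟨-, hba⟩
  simp only [Equiv.Perm.coe_inv, Equiv.symm_apply_apply] at hba
  exact hba.not_gt hab

lemma inversions_mul_inv {g h : Equiv.Perm (Fin n)}
    (hgh : Disjoint (inversions g) (inversions h⁻¹)) :
    inversions (g * h)⁻¹ = inversions g⁻¹ ∪ (inversions h⁻¹).image (Prod.map g g) := by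
  ext ⟨a, b⟩
  simp only [Finset.mem_union, Finset.mem_image, mem_inversions, mul_inv_rev,
    Equiv.Perm.mul_apply, Prod.map, Prod.mk.injEq, Prod.exists]
  have hgh' {x y : Fin n} (hxy : x < y) (hg : g y < g x) (hh : h⁻¹ y < h⁻¹ x) : False :=
    Finset.disjoint_left.mp hgh (mem_inversions (ab := (x, y)) |>.mpr ⟨hxy, hg⟩)
      (mem_inversions (ab := (x, y)) |>.mpr ⟨hxy, hh⟩)
  constructor
  · rintro ⟨hab, hinv⟩
    rcases lt_or_gt_of_ne (g⁻¹.injective.ne hab.ne) with hlt | hgt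
    · exact Or.inr ⟨g⁻¹ a, g⁻¹ b, ⟨hlt, hinv⟩, g.apply_symm_apply a, g.apply_symm_apply b⟩
    · exact Or.inl ⟨hab, hgt⟩
  · rintro (⟨hab, hba⟩ | ⟨x, y, ⟨hxy, hyx⟩, rfl, rfl⟩)
    · refine ⟨hab, lt_of_le_of_ne (not_lt.mp fun hh => hgh' hba ?_ hh) (by simpa using hab.ne')⟩
      simpa using hab
    · refine ⟨lt_of_le_of_ne (not_lt.mp fun hg => hgh' hxy hg hyx) (g.injective.ne hxy.ne), ?_⟩
      simpa using hyx

lemma Xg_mul {g h : Equiv.Perm (Fin n)} (hgh : Disjoint (inversions g) (inversions h⁻¹)) :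
    Xg (g * h) = Xg g * permAct g (Xg h) := by
  rw [Xg, inversions_mul_inv hgh,
    Finset.prod_union (disjoint_inversions_inv_image_inversions_inv g h),
    Finset.prod_image (g.injective.prodMap g.injective).injOn]
  simp only [Xg, permAct, map_prod, rename_X]
  rfl

lemma gstar_mul {g h : Equiv.Perm (Fin n)} (hgh : Disjoint (inversions g) (inversions h⁻¹)) :
    gstar g * gstar h = gstar (g * h) := by
  rw [gstar, gstar, gstar, A.single_mul_single, Xg_mul hgh]

lemma gstar_one : gstar (1 : Equiv.Perm (Fin n)) = 1 := by
  have : inversions (1 : Equiv.Perm (Fin n))⁻¹ = ∅ := by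
    ext ⟨a, b⟩
    simp only [inv_one, mem_inversions, Equiv.Perm.one_apply, Finset.notMem_empty, iff_false]
    exact fun ⟨hab, hba⟩ => hab.not_gt hba
  rw [gstar, Xg, this, Finset.prod_empty, A.one_def]

end Inversions

section Cycle

variable {n : ℕ} [NeZero n] {k m : Fin n}

lemma cyc_apply (x : Fin n) : cyc m k x = k + Fin.cycleRange (m - k) (x - k) := by
  simp [cyc, sub_eq_neg_add]

lemma coe_cyc_apply (h : k ≤ m) (x : Fin n) :
    (cyc m k x : ℕ) =
      if x < k then (x : ℕ) else if x < m then x + 1 else if x = m then k else x := by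
  have hkm : (k : ℕ) ≤ m := h
  rw [cyc_apply]
  rcases lt_or_ge x k with hxk | hkx
  · have : m - k < x - k := by
      rw [Fin.lt_def, Fin.sub_val_of_le h, Fin.coe_sub_iff_lt.mpr hxk]; omega
    simp [Fin.cycleRange_of_gt this, hxk]
  · have hsub : ((x - k : Fin n) : ℕ) = x - k := Fin.sub_val_of_le hkx
    have hmk : ((m - k : Fin n) : ℕ) = m - k := Fin.sub_val_of_le h
    rw [Fin.cycleRange_apply, if_neg (not_lt.mpr hkx)]
    simp only [Fin.lt_def, Fin.ext_iff, hsub, hmk]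
    split_ifs <;> try omega
    · rw [show k + (x - k + 1) = x + 1 by abel, Fin.val_add_one_of_lt' (by omega)]
    · rw [add_zero]
    · rw [add_sub_cancel]

lemma cyc_apply_of_lt (h : k ≤ m) {x : Fin n} (hx : x < k) : cyc m k x = x :=
  Fin.ext <| by simp [coe_cyc_apply h, hx]

lemma cyc_apply_right (h : k ≤ m) : cyc m k m = k :=
  Fin.ext <| by simp [coe_cyc_apply h, not_lt.mpr h]

lemma cyc_lt_cyc (h : k ≤ m) {a b : Fin n} (hab : a < b) (hb : b ≠ m) :
    cyc m k a < cyc m k b := by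
  rw [Fin.lt_def, coe_cyc_apply h, coe_cyc_apply h]
  simp only [Fin.lt_def, Fin.le_def, Fin.ext_iff] at *
  split_ifs <;> omega

lemma fst_eq_of_mem_inversions_cyc_inv (h : k ≤ m) {ab : Fin n × Fin n}
    (hab : ab ∈ inversions (cyc m k)⁻¹) : ab.1 = k := by
  obtain ⟨hlt, hinv⟩ := mem_inversions.mp hab
  by_contra hne
  have hm : (cyc m k)⁻¹ ab.1 ≠ m := fun hm =>
    hne ((Equiv.Perm.inv_eq_iff_eq.mp hm).trans (cyc_apply_right h))
  have := cyc_lt_cyc h hinv hm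
  simp only [Equiv.Perm.coe_inv, Equiv.apply_symm_apply] at this
  exact this.not_gt hlt

lemma disjoint_inversions_cyc_inv (h : k ≤ m) {g : Equiv.Perm (Fin n)} (hg : ∀ j ≤ k, g j = j) :
    Disjoint (inversions g) (inversions (cyc m k)⁻¹) := by
  rw [Finset.disjoint_right]
  intro ab hab hg_inv
  obtain ⟨hlt, hgt⟩ := mem_inversions.mp hg_inv
  rw [fst_eq_of_mem_inversions_cyc_inv h hab, hg k le_rfl] at hgt
  have : ab.2 = g ab.2 := g.injective (hg _ hgt.le).symm
  rw [fst_eq_of_mem_inversions_cyc_inv h hab, this] at hlt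
  exact hlt.not_gt hgt

end Cycle

section Factorization

variable {n : ℕ}

def fixingBelow (n ℓ : ℕ) : Finset (Equiv.Perm (Fin n)) :=
  Finset.univ.filter fun g => ∀ j : Fin n, (j : ℕ) < ℓ → g j = j

@[simp] lemma mem_fixingBelow {ℓ : ℕ} {g : Equiv.Perm (Fin n)} :
    g ∈ fixingBelow n ℓ ↔ ∀ j : Fin n, (j : ℕ) < ℓ → g j = j := by
  simp [fixingBelow]

lemma fixingBelow_zero : fixingBelow n 0 = Finset.univ := by
  ext g; simp

lemma fixingBelow_self : fixingBelow n n = {1} := by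
  ext g
  simp only [mem_fixingBelow, Finset.mem_singleton, Equiv.ext_iff, Equiv.Perm.one_apply]
  exact ⟨fun hg j => hg j j.isLt, fun hg j _ => hg j⟩

lemma le_inv_apply_of_mem_fixingBelow {k : Fin n} {h : Equiv.Perm (Fin n)}
    (hh : h ∈ fixingBelow n k) : k ≤ h⁻¹ k := by
  by_contra! hlt
  have := mem_fixingBelow.mp hh _ hlt
  simp only [Equiv.Perm.coe_inv, Equiv.apply_symm_apply] at this
  exact hlt.ne this.symm

variable [NeZero n]

noncomputable def beta (k : Fin n) : A n :=
  ∑ m ∈ Finset.univ.filter (fun m : Fin n => k ≤ m), gstar (cyc m k)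

lemma mul_cyc_mem_fixingBelow {k m : Fin n} (hkm : k ≤ m) {g : Equiv.Perm (Fin n)}
    (hg : g ∈ fixingBelow n (k + 1)) : g * cyc m k ∈ fixingBelow n k := by
  refine mem_fixingBelow.mpr fun j hj => ?_
  rw [Equiv.Perm.mul_apply, cyc_apply_of_lt hkm hj, mem_fixingBelow.mp hg j (by omega)]

lemma mul_cyc_inv_mem_fixingBelow {k : Fin n} {h : Equiv.Perm (Fin n)}
    (hh : h ∈ fixingBelow n k) : h * (cyc (h⁻¹ k) k)⁻¹ ∈ fixingBelow n (k + 1) := by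
  have hk := le_inv_apply_of_mem_fixingBelow hh
  refine mem_fixingBelow.mpr fun j hj => ?_
  rcases Nat.lt_succ_iff_lt_or_eq.mp hj with hlt | heq
  · rw [Equiv.Perm.mul_apply, Equiv.Perm.inv_eq_iff_eq.mpr (cyc_apply_of_lt hk hlt).symm,
      mem_fixingBelow.mp hh j hlt]
  · rw [Fin.ext heq, Equiv.Perm.mul_apply, Equiv.Perm.inv_eq_iff_eq.mpr (cyc_apply_right hk).symm]
    simp

lemma mul_cyc_inv_apply {k m : Fin n} (hkm : k ≤ m) {g : Equiv.Perm (Fin n)}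
    (hg : g ∈ fixingBelow n (k + 1)) : (g * cyc m k)⁻¹ k = m := by
  rw [mul_inv_rev, Equiv.Perm.mul_apply,
    Equiv.Perm.inv_eq_iff_eq.mpr (mem_fixingBelow.mp hg k (Nat.lt_succ_self k)).symm,
    Equiv.Perm.inv_eq_iff_eq.mpr (cyc_apply_right hkm).symm]

lemma sum_fixingBelow_succ_mul_beta (k : Fin n) :
    (∑ g ∈ fixingBelow n (k + 1), gstar g) * beta k = ∑ h ∈ fixingBelow n k, gstar h := by
  calc (∑ g ∈ fixingBelow n (k + 1), gstar g) * beta k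
      = ∑ p ∈ fixingBelow n (k + 1) ×ˢ Finset.univ.filter (k ≤ ·), gstar (p.1 * cyc p.2 k) := by
        rw [A.sum_mul, Finset.sum_product]
        refine Finset.sum_congr rfl fun g hg => ?_
        rw [beta, A.mul_sum]
        refine Finset.sum_congr rfl fun m hm => gstar_mul (disjoint_inversions_cyc_inv ?_ ?_)
        · simpa using hm
        · exact fun j hj => mem_fixingBelow.mp hg j (Nat.lt_succ_of_le hj)
    _ = ∑ h ∈ fixingBelow n k, gstar h := by
        refine Finset.sum_nbij' (fun p => p.1 * cyc p.2 k) (fun h => (h * (cyc (h⁻¹ k) k)⁻¹, h⁻¹ k))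
          ?_ ?_ ?_ ?_ fun _ _ => rfl
        · rintro ⟨g, m⟩ hp
          simp only [Finset.mem_product, Finset.mem_filter, Finset.mem_univ, true_and] at hp
          exact mul_cyc_mem_fixingBelow hp.2 hp.1
        · intro h hh
          exact Finset.mem_product.mpr ⟨mul_cyc_inv_mem_fixingBelow hh,
            by simpa using le_inv_apply_of_mem_fixingBelow hh⟩
        · rintro ⟨g, m⟩ hp
          simp only [Finset.mem_product, Finset.mem_filter, Finset.mem_univ, true_and] at hp
          simp only [mul_cyc_inv_apply hp.2 hp.1, mul_inv_cancel_right]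
        · intro h _
          simp

lemma prod_drop_map_beta {ℓ : ℕ} (hℓ : ℓ ≤ n) :
    (((List.finRange n).drop ℓ).reverse.map beta).prod = ∑ g ∈ fixingBelow n ℓ, gstar g := by
  induction hℓ using Nat.decreasingInduction with
  | self =>
    rw [List.drop_eq_nil_of_le (by simp), fixingBelow_self, Finset.sum_singleton, gstar_one]
    rfl
  | of_succ ℓ hℓ ih =>
    rw [List.drop_eq_getElem_cons (by simpa), List.reverse_cons, List.map_append, List.map_cons,
      List.map_nil, A.prod_append_singleton, ih]
    simpa using sum_fixingBelow_succ_mul_beta ⟨ℓ, hℓ⟩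

end Factorization

/-- factorization `α_n* = β₁*·β₂*⋯β_n*` of `α_n* = Σ_{g∈S_n} g*`,
where `β_{n-k+1}* = Σ_{k ≤ m ≤ n} t_{m,k}*` (the leftmost factor corresponding
to `k = n`, the rightmost to `k = 1`). -/
theorem alpha_factorization {n : ℕ} [NeZero n] :
    (∑ g : Equiv.Perm (Fin n), gstar g) =
      (((List.finRange n).reverse).map
        (fun k => ∑ m ∈ Finset.univ.filter (fun m : Fin n => k ≤ m), gstar (cyc m k))).prod := by
  have h := prod_drop_map_beta (Nat.zero_le n)
  rw [List.drop_zero, fixingBelow_zero] at h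
  exact h.symm
end
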